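/- (Completeness of QBUA◇) For all resource functions P, Q depending on only finitely many variables (finitely supported) and all commands C: if the QBUA◇ validity ⊨B◇ [P] C [Q] holds, then ⊢B◇ [P] C [Q] is derivable in the QBUA◇ proof system. -/
import Mathlib


/-! Basic language: variables, states, semantic expressions, resource values. -/

abbrev Var := String
abbrev State := Var → ℤ
abbrev AExp := State → ℤ
abbrev BExp := State → Bool

/-- Resource values: ℤ ∪ {−∞, +∞}. -/
abbrev RVal := WithTop (WithBot ℤ)
/-- Resource functions. -/
abbrev RF := State → RVal

/-- Embedding of an integer into `RVal`. -/
def iv (n : ℤ) : RVal := ((n : WithBot ℤ) : RVal)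

/-- State update. -/
def upd (σ : State) (x : Var) (v : ℤ) : State := fun y => if y = x then v else σ y

/-- Commands of the IMP-like language. -/
inductive Cmd where
  | skip
  | assign (x : Var) (e : AExp)
  | assume' (b : BExp)
  | tick (e : AExp)
  | seq (c₁ c₂ : Cmd)
  | choice (c₁ c₂ : Cmd)
  | star (c : Cmd)
  | local' (x : Var) (c : Cmd)

/-- Resource-aware big-step semantics: `BigStep C σ p l τ q` is C, σ, p ⇓_l τ, q. -/
inductive BigStep : Cmd → State → ℤ → ℤ → State → ℤ → Prop where
  | skip {σ p} : BigStep .skip σ p p σ p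
  | assign {x e σ p} : BigStep (.assign x e) σ p p (upd σ x (e σ)) p
  | assume' {b : BExp} {σ p} : b σ = true → BigStep (.assume' b) σ p p σ p
  | tick {e σ p} : BigStep (.tick e) σ p (min p (p - e σ)) σ (p - e σ)
  | seq {c₁ c₂ σ p l₁ ρ r l₂ τ q} : BigStep c₁ σ p l₁ ρ r → BigStep c₂ ρ r l₂ τ q →
      BigStep (.seq c₁ c₂) σ p (min l₁ l₂) τ q
  | choiceL {c₁ c₂ σ p l τ q} : BigStep c₁ σ p l τ q → BigStep (.choice c₁ c₂) σ p l τ q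
  | choiceR {c₁ c₂ σ p l τ q} : BigStep c₂ σ p l τ q → BigStep (.choice c₁ c₂) σ p l τ q
  | starZero {c σ p} : BigStep (.star c) σ p p σ p
  | starStep {c σ p l τ q} : BigStep (.seq c (.star c)) σ p l τ q → BigStep (.star c) σ p l τ q
  | local' {x c σ p l τ q} (v : ℤ) : BigStep c σ p l τ q →
      BigStep (.local' x c) (upd σ x v) p l (upd τ x v) q

/-- C, σ, p ⇓ τ, q. -/
def BigStepP (c : Cmd) (σ : State) (p : ℤ) (τ : State) (q : ℤ) : Prop :=
  ∃ l, BigStep c σ p l τ q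

/-- C, σ, p ⇓≤0 τ, q. -/
def BigStepL (c : Cmd) (σ : State) (p : ℤ) (τ : State) (q : ℤ) : Prop :=
  ∃ l ≤ 0, BigStep c σ p l τ q

/-- `Indep f S`: the state function `f` does not depend on the variables in `S`
(i.e. fv(f) ∩ S = ∅). -/
def Indep {α : Type _} (f : State → α) (S : Set Var) : Prop :=
  ∀ σ σ' : State, (∀ y ∉ S, σ y = σ' y) → f σ = f σ'

/-- `Fresh y f`: the variable `y` is not free in the state function `f`. -/
def Fresh {α : Type _} (y : Var) (f : State → α) : Prop :=
  ∀ σ v, f (upd σ y v) = f σ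

/-- The set of variables possibly modified by a command. -/
def modVars : Cmd → Set Var
  | .skip => ∅
  | .assign x _ => {x}
  | .assume' _ => ∅
  | .tick _ => ∅
  | .seq c₁ c₂ => modVars c₁ ∪ modVars c₂
  | .choice c₁ c₂ => modVars c₁ ∪ modVars c₂
  | .star c => modVars c
  | .local' x c => modVars c \ {x}

/-- Substitution e[y/x] on semantic expressions. -/
def esubst {α : Type _} (e : State → α) (x y : Var) : State → α :=
  fun σ => e (upd σ x (σ y))

/-- `y` is not free in the command `C`. -/
def freshC (y : Var) : Cmd → Prop
  | .skip => True
  | .assign z e => y ≠ z ∧ Fresh y e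
  | .assume' b => Fresh y b
  | .tick e => Fresh y e
  | .seq c₁ c₂ => freshC y c₁ ∧ freshC y c₂
  | .choice c₁ c₂ => freshC y c₁ ∧ freshC y c₂
  | .star c => freshC y c
  | .local' z c => y = z ∨ freshC y c

/-- Substitution C[y/x]: rename every free occurrence of `x` in `C` to `y`. -/
def csubst : Cmd → Var → Var → Cmd
  | .skip, _, _ => .skip
  | .assign z e, x, y => .assign (if z = x then y else z) (esubst e x y)
  | .assume' b, x, y => .assume' (esubst b x y)
  | .tick e, x, y => .tick (esubst e x y)
  | .seq c₁ c₂, x, y => .seq (csubst c₁ x y) (csubst c₂ x y)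
  | .choice c₁ c₂, x, y => .choice (csubst c₁ x y) (csubst c₂ x y)
  | .star c, x, y => .star (csubst c x y)
  | .local' z c, x, y => if z = x then .local' z c else .local' z (csubst c x y)

/-- Bounded iteration: C⁰ = skip, C^(n+1) = C; Cⁿ. -/
def iter (c : Cmd) : ℕ → Cmd
  | 0 => .skip
  | n + 1 => .seq c (iter c n)

/-- Pointwise order on resource functions. -/
def rle (P Q : RF) : Prop := ∀ σ, P σ ≤ Q σ

/-- [B]: +∞ if B holds, −∞ otherwise. -/
def bnd (b : BExp) : RF := fun σ => if b σ then ⊤ else ⊥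

/-- `P` is finitely supported: it depends on only finitely many variables. -/
def FinSupp (P : RF) : Prop := ∃ S : Finset Var, Indep P ((↑S : Set Var)ᶜ)

/-- Semantic equivalence of commands. -/
def CEquiv (c c' : Cmd) : Prop := ∀ σ p l τ q, BigStep c σ p l τ q ↔ BigStep c' σ p l τ q

/-- QFUA validity ⊨F [P] C [Q]. -/
def FValid (P : RF) (c : Cmd) (Q : RF) : Prop :=
  ∀ τ (q : ℤ), Q τ ≤ iv q → ∃ σ, ∃ p : ℤ, P σ ≤ iv p ∧ BigStepP c σ p τ q

/-- QBUA validity ⊨B [P] C [Q]. -/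
def BValid (P : RF) (c : Cmd) (Q : RF) : Prop :=
  ∀ σ (p : ℤ), iv p ≤ P σ → ∃ τ, ∃ q : ℤ, iv q ≤ Q τ ∧ BigStepP c σ p τ q

/-- QBUA◇ validity ⊨B◇ [P] C [Q]. -/
def DValid (P : RF) (c : Cmd) (Q : RF) : Prop :=
  ∀ σ (p : ℤ), iv p ≤ P σ → ∃ τ, ∃ q : ℤ, iv q ≤ Q τ ∧ BigStepL c σ p τ q

/-- The QBUA proof system ⊢B [P] C [Q]. -/
inductive QBUA : RF → Cmd → RF → Prop where
  | skip {P} : QBUA P .skip P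
  | assign {P : RF} {x e} :
      QBUA P (.assign x e)
        (fun τ => ⨆ v : ℤ, min (P (upd τ x v)) (if τ x = e (upd τ x v) then ⊤ else ⊥))
  | assume' {P : RF} {b : BExp} :
      QBUA (fun σ => min (P σ) (bnd b σ)) (.assume' b) (fun σ => min (P σ) (bnd b σ))
  | tick {P : RF} {e} : QBUA P (.tick e) (fun σ => P σ + iv (-(e σ)))
  | seq {P R Q c₁ c₂} : QBUA P c₁ R → QBUA R c₂ Q → QBUA P (.seq c₁ c₂) Q
  | choiceL {P Q c₁ c₂} : QBUA P c₁ Q → QBUA P (.choice c₁ c₂) Q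
  | choiceR {P Q c₁ c₂} : QBUA P c₂ Q → QBUA P (.choice c₁ c₂) Q
  | loop {P : ℕ → RF} {k : ℕ} {c} :
      (∀ n < k, QBUA (P n) c (P (n + 1))) → QBUA (P 0) (.star c) (P k)
  | local' {P Q : RF} {x c} : QBUA P c Q →
      QBUA (fun σ => ⨆ v : ℤ, P (upd σ x v)) (.local' x c) (fun σ => ⨆ v : ℤ, Q (upd σ x v))
  | disj {I : Type} {Ps Qs : I → RF} {c} : (∀ i, QBUA (Ps i) c (Qs i)) →
      QBUA (fun σ => ⨆ i, Ps i σ) c (fun σ => ⨆ i, Qs i σ)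
  | constancy {P Q : RF} {b : BExp} {c} : QBUA P c Q → Indep b (modVars c) →
      QBUA (fun σ => min (P σ) (bnd b σ)) c (fun σ => min (Q σ) (bnd b σ))
  | relax {P Q F : RF} {c} : QBUA P c Q → Indep F (modVars c) →
      QBUA (fun σ => P σ + F σ) c (fun σ => Q σ + F σ)
  | cons {P P' Q Q' : RF} {c} : rle P P' → QBUA P' c Q' → rle Q' Q → QBUA P c Q
  | subst {P Q : RF} {c x y} : QBUA P c Q → Fresh y P → Fresh y Q → freshC y c →
      QBUA (esubst P x y) (csubst c x y) (esubst Q x y)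

/-- The QBUA◇ proof system ⊢B◇ [P] C [Q]. -/
inductive QBUAD : RF → Cmd → RF → Prop where
  | skip {P : RF} : (∀ σ, P σ ≤ iv 0) → QBUAD P .skip P
  | assign {P : RF} {x e} : (∀ σ, P σ ≤ iv 0) →
      QBUAD P (.assign x e)
        (fun τ => ⨆ v : ℤ, min (P (upd τ x v)) (if τ x = e (upd τ x v) then ⊤ else ⊥))
  | assume' {P : RF} {b : BExp} : (∀ σ, P σ ≤ iv 0) →
      QBUAD (fun σ => min (P σ) (bnd b σ)) (.assume' b) (fun σ => min (P σ) (bnd b σ))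
  | tick {P : RF} {e} : (∀ σ, min (P σ) (P σ + iv (-(e σ))) ≤ iv 0) →
      QBUAD P (.tick e) (fun σ => P σ + iv (-(e σ)))
  | seqL {P R Q c₁ c₂} : QBUAD P c₁ R → QBUA R c₂ Q → QBUAD P (.seq c₁ c₂) Q
  | seqR {P R Q c₁ c₂} : QBUA P c₁ R → QBUAD R c₂ Q → QBUAD P (.seq c₁ c₂) Q
  | choiceL {P Q c₁ c₂} : QBUAD P c₁ Q → QBUAD P (.choice c₁ c₂) Q
  | choiceR {P Q c₁ c₂} : QBUAD P c₂ Q → QBUAD P (.choice c₁ c₂) Q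
  | loopZero {P : RF} {c} : (∀ σ, P σ ≤ iv 0) → QBUAD P (.star c) P
  | loop {P : ℕ → RF} {k : ℕ} {c} :
      (∀ n < k, QBUA (P n) c (P (n + 1))) →
      (m : ℕ) → m < k → QBUAD (P m) c (P (m + 1)) →
      QBUAD (P 0) (.star c) (P k)
  | local' {P Q : RF} {x c} : QBUAD P c Q →
      QBUAD (fun σ => ⨆ v : ℤ, P (upd σ x v)) (.local' x c) (fun σ => ⨆ v : ℤ, Q (upd σ x v))
  | disj {I : Type} {Ps Qs : I → RF} {c} : (∀ i, QBUAD (Ps i) c (Qs i)) →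
      QBUAD (fun σ => ⨆ i, Ps i σ) c (fun σ => ⨆ i, Qs i σ)
  | constancy {P Q : RF} {b : BExp} {c} : QBUAD P c Q → Indep b (modVars c) →
      QBUAD (fun σ => min (P σ) (bnd b σ)) c (fun σ => min (Q σ) (bnd b σ))
  | relax {P Q F : RF} {c} : QBUAD P c Q → Indep F (modVars c) → (∀ σ, F σ ≤ iv 0) →
      QBUAD (fun σ => P σ + F σ) c (fun σ => Q σ + F σ)
  | cons {P P' Q Q' : RF} {c} : rle P P' → QBUAD P' c Q' → rle Q' Q → QBUAD P c Q
  | subst {P Q : RF} {c x y} : QBUAD P c Q → Fresh y P → Fresh y Q → freshC y c →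
      QBUAD (esubst P x y) (csubst c x y) (esubst Q x y)
  | equiv {P Q c c'} : QBUAD P c Q → CEquiv c c' → QBUAD P c' Q


/-! ### Auxiliary development for completeness -/

open Classical in
/-- Singleton resource function: `iv p` at `σ`, `⊥` elsewhere. -/
noncomputable def dd (σ : State) (p : ℤ) : RF := fun ρ => if ρ = σ then iv p else ⊥

lemma iv_le_iv {a b : ℤ} : iv a ≤ iv b ↔ a ≤ b := by
  simp [iv]

lemma iv_add (a b : ℤ) : iv a + iv b = iv (a + b) := by
  simp [iv]

lemma bot_add_iv (b : ℤ) : (⊥ : RVal) + iv b = ⊥ := by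
  have : (⊥ : RVal) = ((⊥ : WithBot ℤ) : RVal) := rfl
  rw [this, iv, ← WithTop.coe_add]
  simp

lemma iv_min (a b : ℤ) : min (iv a) (iv b) = iv (min a b) := by
  rcases le_total a b with h | h
  · rw [min_eq_left (iv_le_iv.2 h), min_eq_left h]
  · rw [min_eq_right (iv_le_iv.2 h), min_eq_right h]

lemma dd_self (σ : State) (p : ℤ) : dd σ p σ = iv p := by simp [dd]

lemma dd_ne {ρ σ : State} (h : ρ ≠ σ) (p : ℤ) : dd σ p ρ = ⊥ := by simp [dd, h]

lemma dd_le_zero {σ : State} {p : ℤ} (h : p ≤ 0) : ∀ ρ, dd σ p ρ ≤ iv 0 := by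
  intro ρ
  by_cases hρ : ρ = σ
  · subst hρ; rw [dd_self]; exact iv_le_iv.2 h
  · rw [dd_ne hρ]; exact bot_le

lemma upd_upd (σ : State) (x : Var) (v w : ℤ) : upd (upd σ x v) x w = upd σ x w := by
  funext y; by_cases h : y = x <;> simp [upd, h]

lemma upd_self (σ : State) (x : Var) : upd σ x (σ x) = σ := by
  funext y; simp [upd]; intro h; subst h; rfl

lemma bigStep_l_le_q {c σ p l τ q} (h : BigStep c σ p l τ q) : l ≤ q := by
  induction h with
  | skip => exact le_refl _
  | assign => exact le_refl _
  | assume' _ => exact le_refl _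
  | tick => exact min_le_right _ _
  | seq _ _ ih₁ ih₂ => exact le_trans (min_le_right _ _) ih₂
  | choiceL _ ih => exact ih
  | choiceR _ ih => exact ih
  | starZero => exact le_refl _
  | starStep _ ih => exact ih
  | local' _ _ ih => exact ih

lemma assign_post_le (σ : State) (p : ℤ) (x : Var) (e : AExp) :
    rle (fun τ => ⨆ v : ℤ, min (dd σ p (upd τ x v)) (if τ x = e (upd τ x v) then ⊤ else ⊥))
      (dd (upd σ x (e σ)) p) := by
  intro τ
  apply iSup_le
  intro v
  by_cases h1 : upd τ x v = σ
  · by_cases h2 : τ x = e (upd τ x v)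
    · have hτ : τ = upd σ x (e σ) := by
        have h3 : upd (upd τ x v) x (τ x) = τ := by rw [upd_upd]; exact upd_self τ x
        rw [h1] at h3 h2
        rw [← h3, h2]
      calc min (dd σ p (upd τ x v)) (if τ x = e (upd τ x v) then ⊤ else ⊥)
          ≤ dd σ p (upd τ x v) := min_le_left _ _
        _ = iv p := by rw [h1, dd_self]
        _ = dd (upd σ x (e σ)) p τ := by rw [hτ, dd_self]
    · rw [if_neg h2]
      exact le_trans (min_le_right _ _) bot_le
  · rw [dd_ne h1]
    exact le_trans (min_le_left _ _) bot_le

lemma assume_pre_le {b : BExp} {σ : State} (hb : b σ = true) (p : ℤ) :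
    rle (dd σ p) (fun ρ => min (dd σ p ρ) (bnd b ρ)) := by
  intro ρ
  by_cases hρ : ρ = σ
  · subst hρ
    refine le_min (le_refl _) ?_
    rw [bnd, if_pos hb]; exact le_top
  · rw [dd_ne hρ]; exact bot_le

lemma tick_post_eq (σ : State) (p : ℤ) (e : AExp) :
    (fun ρ => dd σ p ρ + iv (-(e ρ))) = dd σ (p - e σ) := by
  funext ρ
  by_cases hρ : ρ = σ
  · subst hρ; rw [dd_self, dd_self, iv_add]; ring_nf
  · rw [dd_ne hρ, dd_ne hρ, bot_add_iv]

lemma tick_side {σ : State} {p : ℤ} {e : AExp} (h : min p (p - e σ) ≤ 0) :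
    ∀ ρ, min (dd σ p ρ) (dd σ p ρ + iv (-(e ρ))) ≤ iv 0 := by
  intro ρ
  by_cases hρ : ρ = σ
  · subst hρ; rw [dd_self, iv_add]
    have : p + -(e ρ) = p - e ρ := by ring
    rw [this, iv_min]
    exact iv_le_iv.2 h
  · rw [dd_ne hρ]
    exact le_trans (min_le_left _ _) bot_le

/-- The boolean test `ρ x = v` as a `BExp`. -/
def beq (x : Var) (v : ℤ) : BExp := fun ρ => decide (ρ x = v)

lemma beq_indep (x : Var) (v : ℤ) (c : Cmd) : Indep (beq x v) (modVars (.local' x c)) := by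
  intro σ σ' h
  have hx : σ x = σ' x := h x (by simp [modVars])
  simp [beq, hx]

lemma local_pre_le (σ : State) (p : ℤ) (x : Var) (v : ℤ) :
    rle (dd (upd σ x v) p)
      (fun ρ => min (⨆ w : ℤ, dd σ p (upd ρ x w)) (bnd (beq x v) ρ)) := by
  intro ρ
  by_cases hρ : ρ = upd σ x v
  · subst hρ
    rw [dd_self]
    refine le_min ?_ ?_
    · have h1 : upd (upd σ x v) x (σ x) = σ := by rw [upd_upd]; exact upd_self σ x
      have := le_iSup (fun w : ℤ => dd σ p (upd (upd σ x v) x w)) (σ x)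
      rw [h1, dd_self] at this
      exact this
    · have : beq x v (upd σ x v) = true := by simp [beq, upd]
      rw [bnd, if_pos this]; exact le_top
  · rw [dd_ne hρ]; exact bot_le

lemma local_post_le (τ : State) (q : ℤ) (x : Var) (v : ℤ) :
    rle (fun ρ => min (⨆ w : ℤ, dd τ q (upd ρ x w)) (bnd (beq x v) ρ))
      (dd (upd τ x v) q) := by
  intro ρ
  by_cases hb : beq x v ρ = true
  · have hxv : ρ x = v := by simpa [beq] using hb
    refine le_trans (min_le_left _ _) (iSup_le fun w => ?_)
    by_cases hw : upd ρ x w = τ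
    · have hρ : ρ = upd τ x v := by
        have : upd (upd ρ x w) x (ρ x) = ρ := by rw [upd_upd]; exact upd_self ρ x
        rw [← this, hw, hxv]
      rw [hw, dd_self, hρ, dd_self]
    · rw [dd_ne hw]; exact bot_le
  · have hbd : bnd (beq x v) ρ = ⊥ := by
      rw [bnd, if_neg hb]
    dsimp only
    rw [hbd]
    exact le_trans (min_le_right _ _) bot_le

/-- Chains of QBUA singleton triples for the body of a loop. -/
def ChainA (c : Cmd) (σ : State) (p : ℤ) (τ : State) (q : ℤ) : Prop :=
  ∃ k : ℕ, ∃ ρs : ℕ → State, ∃ rs : ℕ → ℤ,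
    ρs 0 = σ ∧ rs 0 = p ∧ ρs k = τ ∧ rs k = q ∧
    ∀ n < k, QBUA (dd (ρs n) (rs n)) c (dd (ρs (n+1)) (rs (n+1)))

lemma chainA_nil (c : Cmd) (σ : State) (p : ℤ) : ChainA c σ p σ p :=
  ⟨0, fun _ => σ, fun _ => p, rfl, rfl, rfl, rfl, fun n hn => absurd hn (Nat.not_lt_zero n)⟩

lemma chainA_cons {c σ p ρ r τ q} (h : QBUA (dd σ p) c (dd ρ r)) (hc : ChainA c ρ r τ q) :
    ChainA c σ p τ q := by
  obtain ⟨k, ρs, rs, h0, h0', hk, hk', hstep⟩ := hc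
  refine ⟨k+1, fun n => match n with | 0 => σ | m+1 => ρs m,
    fun n => match n with | 0 => p | m+1 => rs m, rfl, rfl, hk, hk', ?_⟩
  intro n hn
  match n with
  | 0 => simpa [h0, h0'] using h
  | m+1 => exact hstep m (by omega)

lemma chainA_to_star {c σ p τ q} (hc : ChainA c σ p τ q) :
    QBUA (dd σ p) (.star c) (dd τ q) := by
  obtain ⟨k, ρs, rs, h0, h0', hk, hk', hstep⟩ := hc
  have h := QBUA.loop (P := fun n => dd (ρs (min n k)) (rs (min n k))) (k := k) (c := c) ?_
  · simpa [Nat.zero_min, Nat.min_self, h0, h0', hk, hk'] using h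
  · intro n hn
    have e1 : min n k = n := Nat.min_eq_left hn.le
    have e2 : min (n+1) k = n+1 := Nat.min_eq_left hn
    rw [e1, e2]
    exact hstep n hn

/-- Completeness of QBUA on singleton resource functions, together with chain
decompositions for loops. -/
lemma qbua_sing {c σ p l τ q} (h : BigStep c σ p l τ q) :
    QBUA (dd σ p) c (dd τ q) ∧
      ∀ c₀, (c = .star c₀ ∨ c = .seq c₀ (.star c₀)) → ChainA c₀ σ p τ q := by
  induction h with
  | @skip σ p =>
    exact ⟨QBUA.skip, by rintro c₀ (h | h) <;> cases h⟩
  | @assign x e σ p =>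
    refine ⟨QBUA.cons (fun _ => le_refl _) QBUA.assign (assign_post_le σ p x e), ?_⟩
    rintro c₀ (h | h) <;> cases h
  | @assume' b σ p hb =>
    refine ⟨QBUA.cons (assume_pre_le hb p) QBUA.assume' (fun ρ => min_le_left _ _), ?_⟩
    rintro c₀ (h | h) <;> cases h
  | @tick e σ p =>
    refine ⟨?_, by rintro c₀ (h | h) <;> cases h⟩
    have h := QBUA.tick (P := dd σ p) (e := e)
    rwa [tick_post_eq] at h
  | @seq c₁ c₂ σ p l₁ ρ r l₂ τ q h₁ h₂ ih₁ ih₂ =>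
    refine ⟨QBUA.seq ih₁.1 ih₂.1, ?_⟩
    rintro c₀ (h | h)
    · cases h
    · injection h with hA hB
      subst hA; subst hB
      exact chainA_cons ih₁.1 (ih₂.2 _ (Or.inl rfl))
  | @choiceL c₁ c₂ σ p l τ q h ih =>
    exact ⟨QBUA.choiceL ih.1, by rintro c₀ (h' | h') <;> cases h'⟩
  | @choiceR c₁ c₂ σ p l τ q h ih =>
    exact ⟨QBUA.choiceR ih.1, by rintro c₀ (h' | h') <;> cases h'⟩
  | @starZero c σ p =>
    refine ⟨chainA_to_star (chainA_nil c σ p), ?_⟩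
    rintro c₀ (h | h)
    · injection h with hA; subst hA; exact chainA_nil _ σ p
    · cases h
  | @starStep c σ p l τ q h ih =>
    have hch : ChainA c σ p τ q := ih.2 c (Or.inr rfl)
    refine ⟨chainA_to_star hch, ?_⟩
    rintro c₀ (h' | h')
    · injection h' with hA; subst hA; exact hch
    · cases h'
  | @local' x c σ p l τ q v h ih =>
    refine ⟨?_, by rintro c₀ (h' | h') <;> cases h'⟩
    have h1 := QBUA.local' (x := x) ih.1
    have h2 := QBUA.constancy h1 (beq_indep x v c)
    exact QBUA.cons (local_pre_le σ p x v) h2 (local_post_le τ q x v)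

/-- Chains for the diamond system: every step is QBUA-derivable, steps ending at
nonpositive resource are QBUAD-derivable, and if the yield `l` is nonpositive then
either the chain is trivial with `l = q` or some step is QBUAD-derivable. -/
def ChainD (c : Cmd) (σ : State) (p l : ℤ) (τ : State) (q : ℤ) : Prop :=
  ∃ k : ℕ, ∃ ρs : ℕ → State, ∃ rs : ℕ → ℤ,
    ρs 0 = σ ∧ rs 0 = p ∧ ρs k = τ ∧ rs k = q ∧
    (∀ n < k, QBUA (dd (ρs n) (rs n)) c (dd (ρs (n+1)) (rs (n+1))) ∧
      (rs (n+1) ≤ 0 → QBUAD (dd (ρs n) (rs n)) c (dd (ρs (n+1)) (rs (n+1))))) ∧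
    (l = q ∨ ∃ m < k, (l ≤ 0 → QBUAD (dd (ρs m) (rs m)) c (dd (ρs (m+1)) (rs (m+1)))))

lemma chainD_to_star {c σ p l τ q} (hc : ChainD c σ p l τ q) (hl : l ≤ 0) :
    QBUAD (dd σ p) (.star c) (dd τ q) := by
  obtain ⟨k, ρs, rs, h0, h0', hk, hk', hstep, hdia⟩ := hc
  -- find a diamond-derivable step (or handle the trivial chain)
  have hloop : ∀ m < k, QBUAD (dd (ρs m) (rs m)) c (dd (ρs (m+1)) (rs (m+1))) →
      QBUAD (dd σ p) (.star c) (dd τ q) := by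
    intro m hm hD
    have h := QBUAD.loop (P := fun n => dd (ρs (min n k)) (rs (min n k))) (k := k) (c := c)
      ?_ m hm ?_
    · simpa [Nat.zero_min, Nat.min_self, h0, h0', hk, hk'] using h
    · intro n hn
      have e1 : min n k = n := Nat.min_eq_left hn.le
      have e2 : min (n+1) k = n+1 := Nat.min_eq_left hn
      rw [e1, e2]
      exact (hstep n hn).1
    · have e1 : min m k = m := Nat.min_eq_left hm.le
      have e2 : min (m+1) k = m+1 := Nat.min_eq_left hm
      rw [e1, e2]
      exact hD
  rcases hdia with hq | ⟨m, hm, hD⟩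
  · -- l = q
    rcases Nat.eq_zero_or_pos k with hk0 | hkpos
    · subst hk0
      have hστ : σ = τ := h0 ▸ hk
      have hpq : p = q := h0' ▸ hk'
      subst hστ; subst hpq
      exact QBUAD.loopZero (dd_le_zero (by omega))
    · have hmk : k - 1 < k := by omega
      have hq0 : rs (k - 1 + 1) ≤ 0 := by
        have : k - 1 + 1 = k := by omega
        rw [this, hk']; omega
      exact hloop (k-1) hmk ((hstep (k-1) hmk).2 hq0)
  · exact hloop m hm (hD hl)

lemma chainD_cons {c σ p l₁ ρ r l₂ τ q}
    (hA : QBUA (dd σ p) c (dd ρ r))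
    (hD : l₁ ≤ 0 → QBUAD (dd σ p) c (dd ρ r))
    (hlr : l₁ ≤ r)
    (hc : ChainD c ρ r l₂ τ q) :
    ChainD c σ p (min l₁ l₂) τ q := by
  obtain ⟨k, ρs, rs, h0, h0', hk, hk', hstep, hdia⟩ := hc
  refine ⟨k+1, fun n => match n with | 0 => σ | m+1 => ρs m,
    fun n => match n with | 0 => p | m+1 => rs m, rfl, rfl, hk, hk', ?_, ?_⟩
  · intro n hn
    match n with
    | 0 =>
      constructor
      · simpa [h0, h0'] using hA
      · intro hr0
        have : r ≤ 0 := by rw [← h0']; exact hr0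
        have := hD (le_trans hlr this)
        simpa [h0, h0'] using this
    | m+1 => exact hstep m (by omega)
  · rcases le_total l₁ l₂ with hle | hle
    · refine Or.inr ⟨0, by omega, ?_⟩
      intro hmin
      have : l₁ ≤ 0 := by omega
      simpa [h0, h0'] using hD this
    · rcases hdia with hq | ⟨m, hm, hDm⟩
      · left; omega
      · refine Or.inr ⟨m+1, by omega, ?_⟩
        intro hmin
        exact hDm (by omega)

/-- Completeness of QBUA◇ on singleton resource functions. -/
lemma qbuad_sing {c σ p l τ q} (h : BigStep c σ p l τ q) :
    (l ≤ 0 → QBUAD (dd σ p) c (dd τ q)) ∧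
      ∀ c₀, (c = .star c₀ ∨ c = .seq c₀ (.star c₀)) → ChainD c₀ σ p l τ q := by
  induction h with
  | @skip σ p =>
    refine ⟨fun hl => QBUAD.skip (dd_le_zero hl), ?_⟩
    rintro c₀ (h | h) <;> cases h
  | @assign x e σ p =>
    refine ⟨fun hl => QBUAD.cons (fun _ => le_refl _) (QBUAD.assign (dd_le_zero hl))
      (assign_post_le σ p x e), ?_⟩
    rintro c₀ (h | h) <;> cases h
  | @assume' b σ p hb =>
    refine ⟨fun hl => QBUAD.cons (assume_pre_le hb p) (QBUAD.assume' (dd_le_zero hl))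
      (fun ρ => min_le_left _ _), ?_⟩
    rintro c₀ (h | h) <;> cases h
  | @tick e σ p =>
    refine ⟨?_, by rintro c₀ (h | h) <;> cases h⟩
    intro hl
    have h := QBUAD.tick (P := dd σ p) (e := e) (tick_side hl)
    rwa [tick_post_eq] at h
  | @seq c₁ c₂ σ p l₁ ρ r l₂ τ q h₁ h₂ ih₁ ih₂ =>
    constructor
    · intro hl
      rcases le_total l₁ l₂ with hle | hle
      · exact QBUAD.seqL (ih₁.1 (by omega)) (qbua_sing h₂).1
      · exact QBUAD.seqR (qbua_sing h₁).1 (ih₂.1 (by omega))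
    · rintro c₀ (h | h)
      · cases h
      · injection h with hA hB
        subst hA; subst hB
        exact chainD_cons (qbua_sing h₁).1 ih₁.1 (bigStep_l_le_q h₁) (ih₂.2 _ (Or.inl rfl))
  | @choiceL c₁ c₂ σ p l τ q h ih =>
    exact ⟨fun hl => QBUAD.choiceL (ih.1 hl), by rintro c₀ (h' | h') <;> cases h'⟩
  | @choiceR c₁ c₂ σ p l τ q h ih =>
    exact ⟨fun hl => QBUAD.choiceR (ih.1 hl), by rintro c₀ (h' | h') <;> cases h'⟩
  | @starZero c σ p =>
    have hnil : ∀ c₀ : Cmd, ChainD c₀ σ p p σ p :=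
      fun c₀ => ⟨0, fun _ => σ, fun _ => p, rfl, rfl, rfl, rfl,
        fun n hn => absurd hn (Nat.not_lt_zero n), Or.inl rfl⟩
    refine ⟨fun hl => QBUAD.loopZero (dd_le_zero hl), ?_⟩
    rintro c₀ (h | h)
    · injection h with hA; subst hA; exact hnil _
    · cases h
  | @starStep c σ p l τ q h ih =>
    have hch : ChainD c σ p l τ q := ih.2 c (Or.inr rfl)
    refine ⟨fun hl => chainD_to_star hch hl, ?_⟩
    rintro c₀ (h' | h')
    · injection h' with hA; subst hA; exact hch
    · cases h'
  | @local' x c σ p l τ q v h ih =>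
    refine ⟨?_, by rintro c₀ (h' | h') <;> cases h'⟩
    intro hl
    have h1 := QBUAD.local' (x := x) (ih.1 hl)
    have h2 := QBUAD.constancy h1 (beq_indep x v c)
    exact QBUAD.cons (local_pre_le σ p x v) h2 (local_post_le τ q x v)

lemma iv_forall_le_top {r : RVal} (h : ∀ n : ℤ, iv n ≤ r) : r = ⊤ := by
  induction r using WithTop.recTopCoe with
  | top => rfl
  | coe r =>
    induction r using WithBot.recBotCoe with
    | bot =>
      exfalso
      have h0 := h 0
      rw [iv] at h0
      simp only [WithTop.coe_le_coe] at h0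
      exact absurd h0 (by simp)
    | coe m =>
      exfalso
      have := iv_le_iv.1 (h (m+1))
      omega

lemma le_of_iv_le {r s : RVal} (h : ∀ n : ℤ, iv n ≤ r → iv n ≤ s) : r ≤ s := by
  induction r using WithTop.recTopCoe with
  | top =>
    have htop : s = ⊤ := iv_forall_le_top (fun n => h n le_top)
    rw [htop]
  | coe r =>
    induction r using WithBot.recBotCoe with
    | bot =>
      show (⊥ : RVal) ≤ s
      exact bot_le
    | coe m => exact h m (le_refl _)

theorem qbuad_completeness :
    ∀ (P Q : RF) (C : Cmd), FinSupp P → FinSupp Q → DValid P C Q → QBUAD P C Q := by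
  intro P Q C _ _ hval
  classical
  have hch : ∀ i : {x : State × ℤ // iv x.2 ≤ P x.1},
      ∃ τ, ∃ q : ℤ, iv q ≤ Q τ ∧ BigStepL C i.1.1 i.1.2 τ q :=
    fun i => hval i.1.1 i.1.2 i.2
  choose τs qs hQ hstep using hch
  have hd : ∀ i, QBUAD (dd i.1.1 i.1.2) C (dd (τs i) (qs i)) := by
    intro i
    obtain ⟨l, hl, hb⟩ := hstep i
    exact (qbuad_sing hb).1 hl
  have hdisj := QBUAD.disj (I := {x : State × ℤ // iv x.2 ≤ P x.1})
    (Ps := fun i => dd i.1.1 i.1.2) (Qs := fun i => dd (τs i) (qs i)) (c := C) hd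
  refine QBUAD.cons ?_ hdisj ?_
  · intro σ
    refine le_of_iv_le ?_
    intro n hn
    have h := le_iSup (fun i : {x : State × ℤ // iv x.2 ≤ P x.1} => dd i.1.1 i.1.2 σ)
      ⟨(σ, n), hn⟩
    simpa [dd_self] using h
  · intro σ
    apply iSup_le
    intro i
    show dd (τs i) (qs i) σ ≤ Q σ
    by_cases hσ : σ = τs i
    · subst hσ
      rw [dd_self]
      exact hQ i
    · rw [dd_ne hσ]
      exact bot_le
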